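/- arXiv:0802.3807 — 6 statements merged into one kernel-verified Lean document; each statement's English description precedes it below -/
import Mathlib

section
/- Let A be a commutative ring, A₀ a commutative A-algebra that is finite locally free of rank d as an A-module, and B a commutative A₀-algebra. Suppose Q is a commutative A-algebra corepresenting the affine Weil restriction functor of B, i.e., Q is equipped with bijections Hom_{A-alg}(Q, A') ≅ Hom_{A₀-alg}(B, A₀ ⊗_A A'), natural in the commutative A-algebra A'. If B is formally étale over A₀, then Q is formally étale over A. -/
open TensorProduct

/-- An `A`-module `M` is finite locally free of rank `d` if it is finitely generated,
projective (equivalently, locally free), and has constant rank `d` at all primes of `A`. -/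
def IsFiniteLocallyFreeOfRank (A : Type) [CommRing A]
    (M : Type) [AddCommGroup M] [Module A M] (d : ℕ) : Prop :=
  Module.Finite A M ∧ Module.Projective A M ∧
    ∀ p : PrimeSpectrum A, Module.rankAtStalk M p = d

/-- The homomorphism `A₀ ⊗[A] A' → A₀ ⊗[A] A''` of `A₀`-algebras induced by a homomorphism
of `A`-algebras `A' → A''`; postcomposition with it makes
`A' ↦ Hom_{A₀-alg}(B, A₀ ⊗[A] A')` (the affine Weil restriction functor) a functor. -/
noncomputable def weilBaseChange (A A₀ : Type) [CommRing A] [CommRing A₀] [Algebra A A₀]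
    {A' A'' : Type} [CommRing A'] [Algebra A A'] [CommRing A''] [Algebra A A'']
    (f : A' →ₐ[A] A'') : A₀ ⊗[A] A' →ₐ[A₀] A₀ ⊗[A] A'' :=
  Algebra.TensorProduct.map (AlgHom.id A₀ A₀) f

/-- If `Q` corepresents the affine Weil restriction functor of `B` along the finite locally free (of rank `d`) algebra `A → A₀`, and `B` is formally étale over `A₀`, then `Q` is formally étale over `A`. -/
theorem weilRestriction_formallyEtale
    (A : Type) [CommRing A] (A₀ : Type) [CommRing A₀] [Algebra A A₀]
    (B : Type) [CommRing B] [Algebra A₀ B] (d : ℕ)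
    (hA₀ : IsFiniteLocallyFreeOfRank A A₀ d)
    (Q : Type) [CommRing Q] [Algebra A Q]
    (e : ∀ (A' : Type) [CommRing A'] [Algebra A A'],
      (Q →ₐ[A] A') ≃ (B →ₐ[A₀] A₀ ⊗[A] A'))
    (he : ∀ (A' A'' : Type) [CommRing A'] [Algebra A A'] [CommRing A''] [Algebra A A'']
      (f : A' →ₐ[A] A'') (h : Q →ₐ[A] A'),
      e A'' (f.comp h) = (weilBaseChange A A₀ f).comp (e A' h))
    (hB : Algebra.FormallyEtale A₀ B) : Algebra.FormallyEtale A Q := by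
  refine Algebra.FormallyEtale.iff_comp_bijective.mpr ?_
  intro C _ _ I hI
  set π : C →ₐ[A] C ⧸ I := Ideal.Quotient.mkₐ A I with hπdef
  set g : A₀ ⊗[A] C →ₐ[A₀] A₀ ⊗[A] (C ⧸ I) := weilBaseChange A A₀ π with hgdef
  -- the `A`-algebra version of `g`, with the same underlying ring hom
  set g' : A₀ ⊗[A] C →ₐ[A] A₀ ⊗[A] (C ⧸ I) :=
    Algebra.TensorProduct.map (AlgHom.id A A₀) π with hg'def
  have hring : (g : A₀ ⊗[A] C →+* A₀ ⊗[A] (C ⧸ I)) = (g' : A₀ ⊗[A] C →+* A₀ ⊗[A] (C ⧸ I)) := rfl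
  have hπsurj : Function.Surjective π := Ideal.Quotient.mk_surjective
  have hsurj : Function.Surjective g := by
    show Function.Surjective (g : A₀ ⊗[A] C →+* A₀ ⊗[A] (C ⧸ I))
    rw [hring]
    exact TensorProduct.map_surjective Function.surjective_id hπsurj
  set J : Ideal (A₀ ⊗[A] C) := RingHom.ker g with hJdef
  have hJker : J = (I.map
      (Algebra.TensorProduct.includeRight : C →ₐ[A] A₀ ⊗[A] C) : Ideal (A₀ ⊗[A] C)) := by
    have hker' : J = RingHom.ker g' := rfl
    rw [hker', Algebra.TensorProduct.lTensor_ker π hπsurj]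
    congr 1
    ext x
    simp [hπdef, RingHom.mem_ker, Ideal.Quotient.eq_zero_iff_mem]
  have hJ2 : J ^ 2 = ⊥ := by
    rw [hJker, ← Ideal.map_pow, hI, Ideal.map_bot]
  -- bijectivity on the Weil-restricted side
  have hBbij := Algebra.FormallyEtale.comp_bijective A₀ B J hJ2
  set iso : ((A₀ ⊗[A] C) ⧸ J) ≃ₐ[A₀] A₀ ⊗[A] (C ⧸ I) :=
    Ideal.quotientKerAlgEquivOfSurjective hsurj with hisodef
  have hgfact : ∀ x : A₀ ⊗[A] C, g x = iso (Ideal.Quotient.mkₐ A₀ J x) := by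
    intro x
    show g x = iso (Ideal.Quotient.mk J x)
    rw [hisodef]
    exact (Ideal.quotientKerAlgEquivOfSurjective_mk hsurj x).symm
  have keybij : Function.Bijective
      (fun h : B →ₐ[A₀] A₀ ⊗[A] C => g.comp h) := by
    have hcompeq : ∀ h : B →ₐ[A₀] A₀ ⊗[A] C,
        g.comp h = (iso.toAlgHom).comp ((Ideal.Quotient.mkₐ A₀ J).comp h) := by
      intro h; ext b; simp [hgfact]
    have hiso : Function.Bijective
        (fun k : B →ₐ[A₀] (A₀ ⊗[A] C) ⧸ J => (iso.toAlgHom).comp k) := by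
      constructor
      · intro k₁ k₂ hk
        ext b
        have := congrArg (fun k : B →ₐ[A₀] A₀ ⊗[A] (C ⧸ I) => iso.symm (k b)) hk
        simpa using this
      · intro k
        exact ⟨(iso.symm.toAlgHom).comp k, by ext b; simp⟩
    have : (fun h : B →ₐ[A₀] A₀ ⊗[A] C => g.comp h) =
        (fun k : B →ₐ[A₀] (A₀ ⊗[A] C) ⧸ J => (iso.toAlgHom).comp k) ∘
        (fun h : B →ₐ[A₀] A₀ ⊗[A] C => (Ideal.Quotient.mkₐ A₀ J).comp h) := by
      funext h; exact hcompeq h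
    rw [this]
    exact hiso.comp hBbij
  -- transfer along the natural bijections `e`
  have hnat : ∀ h : Q →ₐ[A] C, e (C ⧸ I) (π.comp h) = g.comp (e C h) := fun h => he C (C ⧸ I) π h
  have hfuneq : ((Ideal.Quotient.mkₐ A I).comp : (Q →ₐ[A] C) → Q →ₐ[A] C ⧸ I) =
      (e (C ⧸ I)).symm ∘ (fun h : B →ₐ[A₀] A₀ ⊗[A] C => g.comp h) ∘ (e C) := by
    funext h
    have := hnat h
    simp only [Function.comp_apply, ← this]
    exact ((e (C ⧸ I)).symm_apply_apply _).symm
  rw [hfuneq]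
  exact ((e (C ⧸ I)).symm.bijective.comp keybij).comp (e C).bijective
end

section
/- Let A be a commutative ring, A₀ a commutative A-algebra that is finite locally free of rank d as an A-module, and B a commutative A₀-algebra. Suppose Q is a commutative A-algebra corepresenting the affine Weil restriction functor of B, i.e., Q is equipped with bijections Hom_{A-alg}(Q, A') ≅ Hom_{A₀-alg}(B, A₀ ⊗_A A'), natural in the commutative A-algebra A'. If B is formally unramified over A₀, then Q is formally unramified over A. -/
open TensorProduct

/-- If `Q` corepresents the affine Weil restriction functor of `B` along the finite locally free (of rank `d`) algebra `A → A₀`, and `B` is formally unramified over `A₀`, then `Q` is formally unramified over `A`. -/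
theorem weilRestriction_formallyUnramified
    (A : Type) [CommRing A] (A₀ : Type) [CommRing A₀] [Algebra A A₀]
    (B : Type) [CommRing B] [Algebra A₀ B] (d : ℕ)
    (hA₀ : IsFiniteLocallyFreeOfRank A A₀ d)
    (Q : Type) [CommRing Q] [Algebra A Q]
    (e : ∀ (A' : Type) [CommRing A'] [Algebra A A'],
      (Q →ₐ[A] A') ≃ (B →ₐ[A₀] A₀ ⊗[A] A'))
    (he : ∀ (A' A'' : Type) [CommRing A'] [Algebra A A'] [CommRing A''] [Algebra A A'']
      (f : A' →ₐ[A] A'') (h : Q →ₐ[A] A'),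
      e A'' (f.comp h) = (weilBaseChange A A₀ f).comp (e A' h))
    (hB : Algebra.FormallyUnramified A₀ B) : Algebra.FormallyUnramified A Q := by
  rw [Algebra.FormallyUnramified.iff_comp_injective]
  intro C _ _ I hI f g hfg
  apply (e C).injective
  set π : C →ₐ[A] C ⧸ I := Ideal.Quotient.mkₐ A I with hπ
  have h1 : (weilBaseChange A A₀ π).comp (e C f) = (weilBaseChange A A₀ π).comp (e C g) := by
    rw [← he, ← he, hfg]
  set J : Ideal (A₀ ⊗[A] C) :=
    I.map (Algebra.TensorProduct.includeRight : C →ₐ[A] A₀ ⊗[A] C) with hJdef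
  have hJ : J ^ 2 = ⊥ := by
    rw [hJdef, pow_two, ← Ideal.map_mul, ← pow_two, hI, Ideal.map_bot]
  have hker : RingHom.ker (weilBaseChange A A₀ π : A₀ ⊗[A] C →+* A₀ ⊗[A] (C ⧸ I)) = J := by
    have h2 : (weilBaseChange A A₀ π : A₀ ⊗[A] C →+* A₀ ⊗[A] (C ⧸ I))
        = (Algebra.TensorProduct.map (AlgHom.id A A₀) π : A₀ ⊗[A] C →+* A₀ ⊗[A] (C ⧸ I)) := rfl
    rw [h2, ← AlgHom.ker_coe, Algebra.TensorProduct.lTensor_ker π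
      (Ideal.Quotient.mkₐ_surjective A I), hJdef]
    congr 1
    exact Ideal.Quotient.mkₐ_ker A I
  refine Algebra.FormallyUnramified.comp_injective (R := A₀) (A := B) J hJ ?_
  ext b
  have h3 : Ideal.Quotient.mk J (e C f b) = Ideal.Quotient.mk J (e C g b) := by
    rw [Ideal.Quotient.eq, ← hker, RingHom.mem_ker, map_sub, sub_eq_zero]
    exact congrFun (congrArg (fun φ => φ.toFun) h1) b
  simpa using h3
end

section
/- Let A be a commutative ring, A₀ a commutative A-algebra that is finite locally free of rank d as an A-module, and B a commutative A₀-algebra. Suppose Q is a commutative A-algebra corepresenting the affine Weil restriction functor of B, i.e., Q is equipped with bijections Hom_{A-alg}(Q, A') ≅ Hom_{A₀-alg}(B, A₀ ⊗_A A'), natural in the commutative A-algebra A'. If B is of finite type as an A₀-algebra, then Q is of finite type as an A-algebra. -/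
open TensorProduct

theorem exists_dual_basis (A : Type) [CommRing A] (A₀ : Type) [CommRing A₀] [Algebra A A₀]
    (h1 : Module.Finite A A₀) (h2 : Module.Projective A A₀) :
    ∃ (n : ℕ) (x : Fin n → A₀) (f : Fin n → (A₀ →ₗ[A] A)),
      ∀ a : A₀, ∑ i, f i a • x i = a := by
  obtain ⟨n, F, hF⟩ := Module.Finite.exists_fin' A A₀
  obtain ⟨s, hs⟩ := Module.projective_lifting_property F (LinearMap.id) hF
  refine ⟨n, fun i => F (Pi.single i 1), fun i => (LinearMap.proj i).comp s, fun a => ?_⟩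
  have h2 : ∀ i : Fin n, ((LinearMap.proj i).comp s) a • F (Pi.single i 1)
      = F (Pi.single i (s a i)) := by
    intro i
    rw [← map_smul]
    congr 1
    rw [← Pi.single_smul, smul_eq_mul, mul_one]; rfl
  simp only [h2]
  rw [← map_sum, Finset.univ_sum_single (s a)]
  exact LinearMap.congr_fun hs a

theorem coord_decomp (A : Type) [CommRing A] (A₀ : Type) [CommRing A₀] [Algebra A A₀]
    (Q : Type) [CommRing Q] [Algebra A Q]
    {n : ℕ} (x : Fin n → A₀) (f : Fin n → (A₀ →ₗ[A] A))
    (hx : ∀ a : A₀, ∑ i, f i a • x i = a) (t : A₀ ⊗[A] Q) :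
    ∑ i, x i ⊗ₜ[A] ((TensorProduct.lid A Q).toLinearMap.comp
      (LinearMap.rTensor Q (f i))) t = t := by
  induction t with
  | zero => simp
  | add t₁ t₂ h₁ h₂ => simp only [map_add, TensorProduct.tmul_add, Finset.sum_add_distrib, h₁, h₂]
  | tmul a q =>
    simp only [LinearMap.comp_apply, LinearMap.rTensor_tmul, LinearEquiv.coe_coe,
      TensorProduct.lid_tmul]
    calc ∑ i, x i ⊗ₜ[A] (f i a • q) = ∑ i, (f i a • x i) ⊗ₜ[A] q := by
          simp_rw [TensorProduct.tmul_smul, TensorProduct.smul_tmul']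
      _ = a ⊗ₜ[A] q := by rw [← TensorProduct.sum_tmul, hx]

set_option maxHeartbeats 1000000 in
set_option synthInstance.maxHeartbeats 200000 in
/-- If `Q` corepresents the affine Weil restriction functor of `B` along the finite locally free (of rank `d`) algebra `A → A₀`, and `B` is of finite type over `A₀`, then `Q` is of finite type over `A`. -/
theorem weilRestriction_finiteType
    (A : Type) [CommRing A] (A₀ : Type) [CommRing A₀] [Algebra A A₀]
    (B : Type) [CommRing B] [Algebra A₀ B] (d : ℕ)
    (hA₀ : IsFiniteLocallyFreeOfRank A A₀ d)
    (Q : Type) [CommRing Q] [Algebra A Q]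
    (e : ∀ (A' : Type) [CommRing A'] [Algebra A A'],
      (Q →ₐ[A] A') ≃ (B →ₐ[A₀] A₀ ⊗[A] A'))
    (he : ∀ (A' A'' : Type) [CommRing A'] [Algebra A A'] [CommRing A''] [Algebra A A'']
      (f : A' →ₐ[A] A'') (h : Q →ₐ[A] A'),
      e A'' (f.comp h) = (weilBaseChange A A₀ f).comp (e A' h))
    (hB : Algebra.FiniteType A₀ B) : Algebra.FiniteType A Q := by
  obtain ⟨hfin, hproj, -⟩ := hA₀
  haveI := hproj
  haveI : Module.Flat A A₀ := Module.Flat.of_projective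
  obtain ⟨n, x, f, hx⟩ := exists_dual_basis A A₀ hfin hproj
  -- coordinate maps
  set c : Fin n → (A₀ ⊗[A] Q →ₗ[A] Q) := fun i =>
    (TensorProduct.lid A Q).toLinearMap.comp (LinearMap.rTensor Q (f i)) with hc
  -- universal element
  set σ : B →ₐ[A₀] A₀ ⊗[A] Q := e Q (AlgHom.id A Q) with hσ
  -- generators of B
  obtain ⟨s, hs⟩ := hB
  -- the finitely generated subalgebra
  set G : Set Q := Set.range (fun p : Fin n × s => c p.1 (σ p.2.1)) with hG
  set Q' : Subalgebra A Q := Algebra.adjoin A G with hQ'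
  -- the base-changed inclusion
  set j : A₀ ⊗[A] Q' →ₐ[A₀] A₀ ⊗[A] Q := weilBaseChange A A₀ Q'.val with hj
  have hjinj : Function.Injective j := by
    have hcoe : ⇑j = ⇑(LinearMap.lTensor A₀ (Q'.val.toLinearMap)) := by
      funext t
      induction t with
      | zero => simp
      | add t₁ t₂ h₁ h₂ => rw [map_add, map_add, h₁, h₂]
      | tmul a q => rfl
    rw [hcoe]
    exact Module.Flat.lTensor_preserves_injective_linearMap (M := A₀)
      Q'.val.toLinearMap Subtype.val_injective
  -- σ b lands in the range of j for all b
  have hmem : ∀ b : B, σ b ∈ j.range := by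
    have hT : (⊤ : Subalgebra A₀ B) ≤ (j.range.comap σ) := by
      rw [← hs]
      apply Algebra.adjoin_le
      intro b hb
      show σ b ∈ j.range
      rw [← coord_decomp A A₀ Q x f hx (σ b)]
      apply Subalgebra.sum_mem
      intro i _
      have hgen : c i (σ b) ∈ Q' := Algebra.subset_adjoin ⟨(i, ⟨b, hb⟩), rfl⟩
      exact ⟨x i ⊗ₜ[A] (⟨c i (σ b), hgen⟩ : Q'), rfl⟩
    intro b
    exact hT (by trivial)
  -- factor σ through A₀ ⊗ Q'
  set σ' : B →ₐ[A₀] A₀ ⊗[A] Q' :=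
    ((AlgEquiv.ofInjective j hjinj).symm.toAlgHom).comp (σ.codRestrict j.range hmem) with hσ'
  have hjσ' : j.comp σ' = σ := by
    ext b
    show j ((AlgEquiv.ofInjective j hjinj).symm (σ.codRestrict j.range hmem b)) = σ b
    have := AlgEquiv.ofInjective_apply j hjinj
      ((AlgEquiv.ofInjective j hjinj).symm (σ.codRestrict j.range hmem b))
    rw [AlgEquiv.apply_symm_apply] at this
    exact this.symm
  -- the retraction
  set h : Q →ₐ[A] Q' := (e Q').symm σ' with hh
  have key : Q'.val.comp h = AlgHom.id A Q := by
    apply (e Q).injective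
    rw [he Q' Q Q'.val h]
    rw [hh, Equiv.apply_symm_apply]
    rw [← hj, hjσ', hσ]
  -- conclude Q' = ⊤
  have htop : Q' = ⊤ := by
    rw [eq_top_iff]
    intro q _
    have : Q'.val (h q) = q := AlgHom.congr_fun key q
    rw [← this]
    exact (h q).2
  constructor
  rw [← htop, hQ']
  apply Subalgebra.fg_def.2
  exact ⟨G, Set.finite_range _, rfl⟩
end

section
/- Let A be a commutative ring, A₀ a commutative A-algebra that is finite locally free of rank d as an A-module, and B a commutative A₀-algebra. Suppose Q is a commutative A-algebra corepresenting the affine Weil restriction functor of B, i.e., Q is equipped with bijections Hom_{A-alg}(Q, A') ≅ Hom_{A₀-alg}(B, A₀ ⊗_A A'), natural in the commutative A-algebra A'. If B is of finite presentation as an A₀-algebra, then Q is of finite presentation as an A-algebra. -/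
open TensorProduct

lemma weilBaseChange_tmul (A A₀ : Type) [CommRing A] [CommRing A₀] [Algebra A A₀]
    {A' A'' : Type} [CommRing A'] [Algebra A A'] [CommRing A''] [Algebra A A'']
    (f : A' →ₐ[A] A'') (a : A₀) (x : A') :
    weilBaseChange A A₀ f (a ⊗ₜ x) = a ⊗ₜ f x := rfl

lemma weilBaseChange_comp (A A₀ : Type) [CommRing A] [CommRing A₀] [Algebra A A₀]
    {A' A'' A''' : Type} [CommRing A'] [Algebra A A'] [CommRing A''] [Algebra A A'']
    [CommRing A'''] [Algebra A A''']
    (g : A'' →ₐ[A] A''') (f : A' →ₐ[A] A'') :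
    weilBaseChange A A₀ (g.comp f)
      = (weilBaseChange A A₀ g).comp (weilBaseChange A A₀ f) :=
  Algebra.TensorProduct.map_id_comp g f

lemma weilBaseChange_eq_lTensor (A A₀ : Type) [CommRing A] [CommRing A₀] [Algebra A A₀]
    {A' A'' : Type} [CommRing A'] [Algebra A A'] [CommRing A''] [Algebra A A'']
    (f : A' →ₐ[A] A'') (x : A₀ ⊗[A] A') :
    weilBaseChange A A₀ f x = LinearMap.lTensor A₀ f.toLinearMap x := by
  induction x using TensorProduct.induction_on with
  | zero => simp
  | tmul a q => simp [weilBaseChange_tmul]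
  | add x y hx hy => simp [map_add, hx, hy]

private theorem weil_step1
    (A : Type) [CommRing A] (A₀ : Type) [CommRing A₀] [Algebra A A₀]
    (B : Type) [CommRing B] [Algebra A₀ B]
    (hproj : Module.Projective A A₀)
    (Q : Type) [CommRing Q] [Algebra A Q]
    (e : ∀ (A' : Type) [CommRing A'] [Algebra A A'],
      (Q →ₐ[A] A') ≃ (B →ₐ[A₀] A₀ ⊗[A] A'))
    (he : ∀ (A' A'' : Type) [CommRing A'] [Algebra A A'] [CommRing A''] [Algebra A A'']
      (f : A' →ₐ[A] A'') (h : Q →ₐ[A] A'),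
      e A'' (f.comp h) = (weilBaseChange A A₀ f).comp (e A' h))
    (hB : Algebra.FiniteType A₀ B) : Algebra.FiniteType A Q := by
  classical
  haveI := hproj
  set φ : B →ₐ[A₀] A₀ ⊗[A] Q := e Q (AlgHom.id A Q) with hφ
  obtain ⟨s, hs⟩ := hB.1
  choose S hS using fun b : B => TensorProduct.exists_finset (R := A) (φ b)
  set gens : Finset Q := s.biUnion (fun b => (S b).image Prod.snd) with hgens
  set Q₁ : Subalgebra A Q := Algebra.adjoin A (gens : Set Q) with hQ₁
  set ι : Q₁ →ₐ[A] Q := Q₁.val with hι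
  have hιinj : Function.Injective ι := fun a b h => Subtype.ext h
  have hinj : Function.Injective (weilBaseChange A A₀ ι) := by
    have h2 := Module.Flat.lTensor_preserves_injective_linearMap (M := A₀)
      ι.toLinearMap hιinj
    intro x y hxy
    apply h2
    rw [← weilBaseChange_eq_lTensor, ← weilBaseChange_eq_lTensor]
    exact hxy
  have hmem : ∀ b : B, φ b ∈ (weilBaseChange A A₀ ι).range := by
    intro b
    have hb : b ∈ Algebra.adjoin A₀ (s : Set B) := hs ▸ trivial
    have hle : Algebra.adjoin A₀ (s : Set B)
        ≤ Subalgebra.comap φ (weilBaseChange A A₀ ι).range := by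
      refine Algebra.adjoin_le (fun x hx => ?_)
      simp only [SetLike.mem_coe, Subalgebra.mem_comap]
      rw [hS x]
      apply Subalgebra.sum_mem
      intro p hp
      have hp2 : p.2 ∈ Q₁ := by
        apply Algebra.subset_adjoin
        exact Finset.mem_coe.mpr (Finset.mem_biUnion.mpr
          ⟨x, Finset.mem_coe.mp hx, Finset.mem_image_of_mem Prod.snd hp⟩)
      exact ⟨p.1 ⊗ₜ ⟨p.2, hp2⟩, rfl⟩
    exact (Subalgebra.mem_comap _ _ _).mp (hle hb)
  set ψ : B →ₐ[A₀] A₀ ⊗[A] Q₁ :=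
    ((AlgEquiv.ofInjective _ hinj).symm.toAlgHom).comp
      (φ.codRestrict (weilBaseChange A A₀ ι).range hmem) with hψ
  have hcomp : (weilBaseChange A A₀ ι).comp ψ = φ := by
    apply AlgHom.ext; intro b
    have key : ∀ y : (weilBaseChange A A₀ ι).range,
        weilBaseChange A A₀ ι ((AlgEquiv.ofInjective _ hinj).symm y) = y := by
      intro y
      conv_rhs => rw [← (AlgEquiv.ofInjective _ hinj).apply_symm_apply y]
      rw [AlgEquiv.ofInjective_apply]
    exact key ⟨φ b, hmem b⟩
  have hid : ι.comp ((e Q₁).symm ψ) = AlgHom.id A Q := by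
    apply (e Q).injective
    rw [he Q₁ Q ι _, (e Q₁).apply_symm_apply, hcomp]
  have hsurj : Function.Surjective ι := fun q =>
    ⟨(e Q₁).symm ψ q, DFunLike.congr_fun hid q⟩
  constructor
  refine ⟨gens, ?_⟩
  rw [← hQ₁]
  exact top_le_iff.mp (fun q _ => by obtain ⟨x, rfl⟩ := hsurj q; exact x.2)

private theorem weil_step2
    (A : Type) [CommRing A] (A₀ : Type) [CommRing A₀] [Algebra A A₀]
    (B : Type) [CommRing B] [Algebra A₀ B]
    (Q : Type) [CommRing Q] [Algebra A Q]
    (e : ∀ (A' : Type) [CommRing A'] [Algebra A A'],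
      (Q →ₐ[A] A') ≃ (B →ₐ[A₀] A₀ ⊗[A] A'))
    (he : ∀ (A' A'' : Type) [CommRing A'] [Algebra A A'] [CommRing A''] [Algebra A A'']
      (f : A' →ₐ[A] A'') (h : Q →ₐ[A] A'),
      e A'' (f.comp h) = (weilBaseChange A A₀ f).comp (e A' h))
    (hB : Algebra.FinitePresentation A₀ B)
    (hFT : Algebra.FiniteType A Q) : Algebra.FinitePresentation A Q := by
  classical
  set φ : B →ₐ[A₀] A₀ ⊗[A] Q := e Q (AlgHom.id A Q) with hφ
  obtain ⟨n, π, hπ⟩ := Algebra.FiniteType.iff_quotient_mvPolynomial''.mp hFT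
  set P : Type := MvPolynomial (Fin n) A with hP
  set I : Ideal P := RingHom.ker π.toRingHom with hI
  suffices hIfg : I.FG by
    exact Algebra.FinitePresentation.of_surjective hπ hIfg
  obtain ⟨m, F, hF, hker⟩ := hB.out
  obtain ⟨T, hT⟩ := hker
  -- surjectivity of the base-changed projection
  have hπl : Function.Surjective π.toLinearMap := hπ
  have hwsurj : Function.Surjective (weilBaseChange A A₀ π) := by
    intro y
    obtain ⟨x, hx⟩ := LinearMap.lTensor_surjective A₀ hπl y
    exact ⟨x, by rw [weilBaseChange_eq_lTensor]; exact hx⟩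
  choose ct hct using fun k : Fin m => hwsurj (φ (F (MvPolynomial.X k)))
  set Ψ₀ : MvPolynomial (Fin m) A₀ →ₐ[A₀] A₀ ⊗[A] P := MvPolynomial.aeval ct with hΨ₀def
  have hΨ₀ : (weilBaseChange A A₀ π).comp Ψ₀ = φ.comp F := by
    apply MvPolynomial.algHom_ext
    intro k
    simp [hΨ₀def, hct]
  -- exactness
  have hexact : Function.Exact (Submodule.subtype (I.restrictScalars A)) π.toLinearMap := by
    intro y
    constructor
    · intro hy
      exact ⟨⟨y, hy⟩, rfl⟩
    · rintro ⟨⟨z, hz⟩, rfl⟩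
      exact hz
  have hexact2 := lTensor_exact A₀ hexact hπl
  -- each relation lifts to a finite combination with coefficients in I
  have hrel : ∀ g : MvPolynomial (Fin m) A₀, g ∈ (T : Set (MvPolynomial (Fin m) A₀)) →
      ∃ Sg : Finset (A₀ × (I.restrictScalars A)),
        Ψ₀ g = Sg.sum fun p => p.1 ⊗ₜ[A] (p.2 : P) := by
    intro g hg
    have hgker : g ∈ RingHom.ker F.toRingHom := by
      rw [← hT]; exact Ideal.subset_span hg
    have h0 : LinearMap.lTensor A₀ π.toLinearMap (Ψ₀ g) = 0 := by
      rw [← weilBaseChange_eq_lTensor]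
      have := DFunLike.congr_fun hΨ₀ g
      simp only [AlgHom.coe_comp, Function.comp_apply] at this
      have hFg : F g = 0 := by rwa [RingHom.mem_ker] at hgker
      rw [this, hFg, map_zero]
    obtain ⟨z, hz⟩ := (hexact2 (Ψ₀ g)).mp h0
    obtain ⟨Sg, hSg⟩ := TensorProduct.exists_finset (R := A) z
    refine ⟨Sg, ?_⟩
    rw [← hz, hSg, map_sum]
    rfl
  choose Sg hSg using fun g : {x // x ∈ T} => hrel g.1 (Finset.mem_coe.mpr g.2)
  set G₀ : Finset P := T.attach.biUnion
    (fun g => (Sg g).image (fun p => (p.2 : P))) with hG₀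
  have hG₀I : ∀ x ∈ G₀, x ∈ I := by
    intro x hx
    obtain ⟨g, -, hx2⟩ := Finset.mem_biUnion.mp hx
    obtain ⟨p, -, rfl⟩ := Finset.mem_image.mp hx2
    exact p.2.2
  set J₀ : Ideal P := Ideal.span (G₀ : Set P) with hJ₀
  have hJ₀I : J₀ ≤ I := Ideal.span_le.mpr (fun x hx => hG₀I x (Finset.mem_coe.mp hx))
  set ρ : P →ₐ[A] P ⧸ J₀ := Ideal.Quotient.mkₐ A J₀ with hρ
  set τ : P ⧸ J₀ →ₐ[A] Q := Ideal.Quotient.liftₐ J₀ π (fun a ha => hJ₀I ha) with hτ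
  have hτρ : ∀ x : P, τ (ρ x) = π x := fun x =>
    DFunLike.congr_fun (Ideal.Quotient.liftₐ_comp J₀ π (fun a ha => hJ₀I ha)) x
  set Ψ₁ : MvPolynomial (Fin m) A₀ →ₐ[A₀] A₀ ⊗[A] (P ⧸ J₀) :=
    (weilBaseChange A A₀ ρ).comp Ψ₀ with hΨ₁def
  have hΨ₁T : ∀ g ∈ T, Ψ₁ g = 0 := by
    intro g hg
    have : Ψ₀ g = (Sg ⟨g, hg⟩).sum fun p => p.1 ⊗ₜ[A] (p.2 : P) := hSg ⟨g, hg⟩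
    simp only [hΨ₁def, AlgHom.coe_comp, Function.comp_apply, this, map_sum]
    apply Finset.sum_eq_zero
    intro p hp
    rw [weilBaseChange_tmul]
    have hmem : (p.2 : P) ∈ J₀ := by
      apply Ideal.subset_span
      apply Finset.mem_coe.mpr
      apply Finset.mem_biUnion.mpr
      exact ⟨⟨g, hg⟩, Finset.mem_attach _ _, Finset.mem_image_of_mem _ hp⟩
    have : ρ (p.2 : P) = 0 := by
      rw [hρ]
      exact Ideal.Quotient.eq_zero_iff_mem.mpr hmem
    rw [this, TensorProduct.tmul_zero]
  have hkerF : RingHom.ker F.toRingHom ≤ RingHom.ker Ψ₁.toRingHom := by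
    rw [← hT]
    apply Ideal.span_le.mpr
    intro g hg
    exact hΨ₁T g (Finset.mem_coe.mp hg)
  set ψ : B →ₐ[A₀] A₀ ⊗[A] (P ⧸ J₀) :=
    (Ideal.Quotient.liftₐ (RingHom.ker F.toRingHom) Ψ₁ (fun a ha => hkerF ha)).comp
      (Ideal.quotientKerAlgEquivOfSurjective hF).symm.toAlgHom with hψdef
  have hψF : ∀ x, ψ (F x) = Ψ₁ x := by
    intro x
    have hsec : (Ideal.quotientKerAlgEquivOfSurjective hF).symm (F x)
        = Ideal.Quotient.mk (RingHom.ker F.toRingHom) x := by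
      apply (Ideal.quotientKerAlgEquivOfSurjective hF).injective
      rw [AlgEquiv.apply_symm_apply]
      simp [Ideal.quotientKerAlgEquivOfSurjective]
      rfl
    show (Ideal.Quotient.liftₐ (RingHom.ker F.toRingHom) Ψ₁ (fun a ha => hkerF ha))
      ((Ideal.quotientKerAlgEquivOfSurjective hF).symm (F x)) = Ψ₁ x
    rw [hsec]
    rfl
  have h1 : (weilBaseChange A A₀ τ).comp ψ = φ := by
    apply AlgHom.ext; intro b
    obtain ⟨x, rfl⟩ := hF b
    simp only [AlgHom.coe_comp, Function.comp_apply, hψF]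
    have : (weilBaseChange A A₀ τ).comp Ψ₁ = φ.comp F := by
      rw [hΨ₁def, ← AlgHom.comp_assoc, ← weilBaseChange_comp]
      have : τ.comp ρ = π := Ideal.Quotient.liftₐ_comp J₀ π (fun a ha => hJ₀I ha)
      rw [this, hΨ₀]
    have := DFunLike.congr_fun this x
    simpa using this
  set t : Q →ₐ[A] P ⧸ J₀ := (e (P ⧸ J₀)).symm ψ with ht
  have hτt : τ.comp t = AlgHom.id A Q := by
    apply (e Q).injective
    rw [he _ _ τ t, ht, Equiv.apply_symm_apply, h1, hφ]
  -- equalize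
  have hwk : ∀ k : Fin n, ∃ w : P,
      ρ w = t (π (MvPolynomial.X k)) - ρ (MvPolynomial.X k) ∧ w ∈ I := by
    intro k
    obtain ⟨w, hw⟩ := Ideal.Quotient.mkₐ_surjective A J₀
      (t (π (MvPolynomial.X k)) - ρ (MvPolynomial.X k))
    refine ⟨w, hw, ?_⟩
    have : π w = τ (ρ w) := (hτρ w).symm
    rw [hI, RingHom.mem_ker]
    show π w = 0
    rw [this, hw, map_sub, hτρ]
    have : τ (t (π (MvPolynomial.X k))) = π (MvPolynomial.X k) :=
      DFunLike.congr_fun hτt (π (MvPolynomial.X k))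
    rw [this, sub_self]
  choose w hw1 hw2 using hwk
  set W : Finset P := Finset.image w Finset.univ with hW
  set J : Ideal P := Ideal.span ((G₀ ∪ W : Finset P) : Set P) with hJdef
  have hJ₀J : J₀ ≤ J := by
    rw [hJ₀, hJdef]
    apply Ideal.span_mono
    rw [Finset.coe_union]
    exact Set.subset_union_left
  have hJI : J ≤ I := by
    rw [hJdef]
    apply Ideal.span_le.mpr
    intro x hx
    rcases Finset.mem_union.mp (Finset.mem_coe.mp hx) with h | h
    · exact hG₀I x h
    · obtain ⟨k, -, rfl⟩ := Finset.mem_image.mp h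
      exact hw2 k
  have hJ₀0 : ∀ a : P, a ∈ J₀ → (Ideal.Quotient.mkₐ A J) a = 0 := fun a ha =>
    Ideal.Quotient.eq_zero_iff_mem.mpr (hJ₀J ha)
  set θ : P ⧸ J₀ →ₐ[A] P ⧸ J := Ideal.Quotient.liftₐ J₀ (Ideal.Quotient.mkₐ A J) hJ₀0 with hθ
  have hθρ : ∀ x : P, θ (ρ x) = Ideal.Quotient.mk J x := fun x =>
    DFunLike.congr_fun (Ideal.Quotient.liftₐ_comp J₀ (Ideal.Quotient.mkₐ A J) hJ₀0) x
  have hkey : (θ.comp (t.comp π)) = Ideal.Quotient.mkₐ A J := by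
    apply MvPolynomial.algHom_ext
    intro k
    have h1 : t (π (MvPolynomial.X k))
        = ρ (MvPolynomial.X k) + ρ (w k) := by rw [hw1 k]; ring
    simp only [AlgHom.coe_comp, Function.comp_apply, h1, map_add, hθρ]
    have hwJ : (Ideal.Quotient.mk J) (w k) = 0 := by
      apply Ideal.Quotient.eq_zero_iff_mem.mpr
      apply Ideal.subset_span
      exact Finset.mem_coe.mpr
        (Finset.mem_union_right _ (Finset.mem_image_of_mem w (Finset.mem_univ k)))
    rw [hwJ, add_zero]
    simp [Ideal.Quotient.mkₐ_eq_mk]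
  have hIJ : I ≤ J := by
    intro x hx
    have hπx : π x = 0 := by rwa [hI, RingHom.mem_ker] at hx
    have hx2 := DFunLike.congr_fun hkey x
    simp only [AlgHom.coe_comp, Function.comp_apply] at hx2
    rw [hπx, map_zero, map_zero] at hx2
    apply Ideal.Quotient.eq_zero_iff_mem.mp
    rw [← Ideal.Quotient.mkₐ_eq_mk A J]
    exact hx2.symm
  exact ⟨G₀ ∪ W, by rw [← hJdef]; exact le_antisymm hJI hIJ⟩

/-- If `Q` corepresents the affine Weil restriction functor of `B` along the finite locally free (of rank `d`) algebra `A → A₀`, and `B` is of finite presentation over `A₀`, then `Q` is of finite presentation over `A`. -/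
theorem weilRestriction_finitePresentation
    (A : Type) [CommRing A] (A₀ : Type) [CommRing A₀] [Algebra A A₀]
    (B : Type) [CommRing B] [Algebra A₀ B] (d : ℕ)
    (hA₀ : IsFiniteLocallyFreeOfRank A A₀ d)
    (Q : Type) [CommRing Q] [Algebra A Q]
    (e : ∀ (A' : Type) [CommRing A'] [Algebra A A'],
      (Q →ₐ[A] A') ≃ (B →ₐ[A₀] A₀ ⊗[A] A'))
    (he : ∀ (A' A'' : Type) [CommRing A'] [Algebra A A'] [CommRing A''] [Algebra A A'']
      (f : A' →ₐ[A] A'') (h : Q →ₐ[A] A'),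
      e A'' (f.comp h) = (weilBaseChange A A₀ f).comp (e A' h))
    (hB : Algebra.FinitePresentation A₀ B) : Algebra.FinitePresentation A Q := by
  obtain ⟨-, hproj, -⟩ := hA₀
  have hFT := weil_step1 A A₀ B hproj Q e he (@Algebra.FiniteType.of_finitePresentation A₀ B _ _ _ hB)
  exact weil_step2 A A₀ B Q e he hB hFT
end

section
/- Let A be a commutative ring and A₀ a commutative A-algebra that is finite locally free of rank d as an A-module. Let π : B₂ → B₁ be a surjective homomorphism of commutative A₀-algebras, and for i = 1, 2 let Qᵢ be a commutative A-algebra corepresenting the affine Weil restriction functor of Bᵢ (with given natural bijections Hom_{A-alg}(Qᵢ, A') ≅ Hom_{A₀-alg}(Bᵢ, A₀ ⊗_A A')). Let φ : Q₂ → Q₁ be the A-algebra homomorphism characterized by: for every commutative A-algebra A' and every A-algebra homomorphism h : Q₁ → A', the element of Hom_{A₀-alg}(B₂, A₀ ⊗_A A') corresponding to h ∘ φ equals the composite with π of the element of Hom_{A₀-alg}(B₁, A₀ ⊗_A A') corresponding to h. Then φ is surjective. -/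
open TensorProduct

set_option maxHeartbeats 1000000 in
set_option synthInstance.maxHeartbeats 200000 in
/-- **Weil restriction of a closed immersion of affine schemes is a closed immersion.**
Let `A₀` be an `A`-algebra which is finite locally free of rank `d` as an `A`-module,
`π : B₂ → B₁` a surjective homomorphism of commutative `A₀`-algebras, and for `i = 1, 2` let
`Qᵢ` corepresent the affine Weil restriction functor of `Bᵢ` (via the given natural
bijections `eᵢ`).  If `φ : Q₂ → Q₁` is the `A`-algebra homomorphism characterized by the
property that, for every commutative `A`-algebra `A'` and every `h : Q₁ →ₐ[A] A'`, the
element of `Hom_{A₀-alg}(B₂, A₀ ⊗[A] A')` corresponding to `h ∘ φ` is the composite with `π`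
of the element of `Hom_{A₀-alg}(B₁, A₀ ⊗[A] A')` corresponding to `h`, then `φ` is
surjective. -/
theorem weilRestriction_surjective_of_surjective
    (A : Type) [CommRing A] (A₀ : Type) [CommRing A₀] [Algebra A A₀] (d : ℕ)
    (hA₀ : IsFiniteLocallyFreeOfRank A A₀ d)
    (B₁ B₂ : Type) [CommRing B₁] [Algebra A₀ B₁] [CommRing B₂] [Algebra A₀ B₂]
    (π : B₂ →ₐ[A₀] B₁) (hπ : Function.Surjective π)
    (Q₁ Q₂ : Type) [CommRing Q₁] [Algebra A Q₁] [CommRing Q₂] [Algebra A Q₂]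
    (e₁ : ∀ (A' : Type) [CommRing A'] [Algebra A A'],
      (Q₁ →ₐ[A] A') ≃ (B₁ →ₐ[A₀] A₀ ⊗[A] A'))
    (he₁ : ∀ (A' A'' : Type) [CommRing A'] [Algebra A A'] [CommRing A''] [Algebra A A'']
      (f : A' →ₐ[A] A'') (h : Q₁ →ₐ[A] A'),
      e₁ A'' (f.comp h) = (weilBaseChange A A₀ f).comp (e₁ A' h))
    (e₂ : ∀ (A' : Type) [CommRing A'] [Algebra A A'],
      (Q₂ →ₐ[A] A') ≃ (B₂ →ₐ[A₀] A₀ ⊗[A] A'))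
    (he₂ : ∀ (A' A'' : Type) [CommRing A'] [Algebra A A'] [CommRing A''] [Algebra A A'']
      (f : A' →ₐ[A] A'') (h : Q₂ →ₐ[A] A'),
      e₂ A'' (f.comp h) = (weilBaseChange A A₀ f).comp (e₂ A' h))
    (φ : Q₂ →ₐ[A] Q₁)
    (hφ : ∀ (A' : Type) [CommRing A'] [Algebra A A'] (h : Q₁ →ₐ[A] A'),
      e₂ A' (h.comp φ) = ((e₁ A' h).comp π)) :
    Function.Surjective φ := by
  obtain ⟨-, hproj, -⟩ := hA₀
  haveI : Module.Projective A A₀ := hproj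
  haveI : Module.Flat A A₀ := Module.Flat.of_projective
  -- the range of φ
  let R : Subalgebra A Q₁ := φ.range
  let ι : R →ₐ[A] Q₁ := R.val
  -- j : A₀ ⊗ R → A₀ ⊗ Q₁ is injective by flatness
  let j : A₀ ⊗[A] R →ₐ[A₀] A₀ ⊗[A] Q₁ := weilBaseChange A A₀ ι
  have hjl : ∀ x, j x = LinearMap.lTensor A₀ ι.toLinearMap x := by
    intro x
    induction x using TensorProduct.induction_on with
    | zero => rw [map_zero, map_zero]
    | tmul a r =>
      show Algebra.TensorProduct.map (AlgHom.id A₀ A₀) ι (a ⊗ₜ r) = _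
      rw [Algebra.TensorProduct.map_tmul, LinearMap.lTensor_tmul]
      rfl
    | add x y hx hy => rw [map_add, map_add, hx, hy]
  have hj : Function.Injective j := by
    have h1 : Function.Injective (LinearMap.lTensor A₀ ι.toLinearMap) :=
      Module.Flat.lTensor_preserves_injective_linearMap _ Subtype.val_injective
    intro x y hxy
    apply h1
    rw [← hjl, ← hjl, hxy]
  -- universal elements
  let β₁ : B₁ →ₐ[A₀] A₀ ⊗[A] Q₁ := e₁ Q₁ (AlgHom.id A Q₁)
  let β₂ : B₂ →ₐ[A₀] A₀ ⊗[A] Q₂ := e₂ Q₂ (AlgHom.id A Q₂)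
  -- compatibility: β₁ ∘ π = (1 ⊗ φ) ∘ β₂
  have hcompat : β₁.comp π = (weilBaseChange A A₀ φ).comp β₂ := by
    have h1 := hφ Q₁ (AlgHom.id A Q₁)
    have h2 := he₂ Q₂ Q₁ φ (AlgHom.id A Q₂)
    rw [AlgHom.id_comp] at h1
    rw [AlgHom.comp_id] at h2
    rw [← h1, h2]
  -- φ factors through R
  let φ' : Q₂ →ₐ[A] R := φ.rangeRestrict
  have hfact : ι.comp φ' = φ := by ext x; rfl
  have hwfact : (weilBaseChange A A₀ φ) = j.comp (weilBaseChange A A₀ φ') := by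
    show Algebra.TensorProduct.map (AlgHom.id A₀ A₀) φ = _
    rw [← hfact]
    show Algebra.TensorProduct.map ((AlgHom.id A₀ A₀).comp (AlgHom.id A₀ A₀)) (ι.comp φ') = _
    rw [Algebra.TensorProduct.map_comp]
    rfl
  -- corestriction β₁' : B₁ → A₀ ⊗ R with j ∘ β₁' = β₁
  let g : B₁ → A₀ ⊗[A] R := fun b =>
    (weilBaseChange A A₀ φ') (β₂ (Classical.choose (hπ b)))
  have hg : ∀ b, j (g b) = β₁ b := by
    intro b
    have hb : π (Classical.choose (hπ b)) = b := Classical.choose_spec (hπ b)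
    have h3 := congrArg (fun f => f (Classical.choose (hπ b))) hcompat
    simp only [AlgHom.comp_apply] at h3
    rw [hb] at h3
    rw [h3, hwfact]
    rfl
  let β₁' : B₁ →ₐ[A₀] A₀ ⊗[A] R :=
  { toFun := g
    map_one' := by apply hj; rw [hg, map_one, map_one]
    map_mul' := by intro x y; apply hj; rw [hg, map_mul, map_mul, ← hg, ← hg]
    map_zero' := by apply hj; rw [hg, map_zero, map_zero]
    map_add' := by intro x y; apply hj; rw [hg, map_add, map_add, ← hg, ← hg]
    commutes' := by
      intro a
      apply hj
      rw [hg, AlgHom.commutes, AlgHom.commutes] }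
  have hβ₁' : j.comp β₁' = β₁ := AlgHom.ext hg
  -- pull back via e₁ to get a section
  let h : Q₁ →ₐ[A] R := (e₁ R).symm β₁'
  have hsec : ι.comp h = AlgHom.id A Q₁ := by
    apply (e₁ Q₁).injective
    rw [he₁ R Q₁ ι h]
    have h4 : e₁ R h = β₁' := (e₁ R).apply_symm_apply β₁'
    rw [h4]
    exact hβ₁'
  intro q
  have h5 : ι (h q) = q := congrArg (fun f => f q) hsec
  have hmem : q ∈ φ.range := by rw [← h5]; exact (h q).2
  exact hmem
end

section
/- Let g : S' → S be a finite flat morphism of schemes of rank d, let f : X' → S' be a morphism of schemes, and let U' ⊆ X' be an open subscheme. Suppose R and R_U are S-schemes equipped with bijections Hom_S(T, R) ≅ Hom_{S'}(S' ×_S T, X') and Hom_S(T, R_U) ≅ Hom_{S'}(S' ×_S T, U'), natural in the S-scheme T (i.e., R and R_U represent the Weil restrictions of X' and U' along g). Then the morphism R_U → R corresponding under these bijections to composition with the open immersion U' → X' is an open immersion. -/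
open AlgebraicGeometry CategoryTheory Limits


/-- A morphism of schemes `f : X ⟶ Y` is finite flat of rank `d` if `f` is finite and
`f_* O_X` is a locally free `O_Y`-module of constant rank `d`; equivalently, `f` is finite
and for every affine open `U ⊆ Y` the ring `O_X(f⁻¹ U)` is a finite locally free
`O_Y(U)`-module of constant rank `d`. -/
def FiniteFlatOfRank (d : ℕ) {X Y : AlgebraicGeometry.Scheme} (f : X ⟶ Y) : Prop :=
  AlgebraicGeometry.IsFinite f ∧ ∀ U : Y.affineOpens,
    letI : Algebra Γ(Y, U.1) Γ(X, f ⁻¹ᵁ U.1) := (f.app U.1).hom.toAlgebra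
    Module.Finite Γ(Y, U.1) Γ(X, f ⁻¹ᵁ U.1) ∧
    Module.Projective Γ(Y, U.1) Γ(X, f ⁻¹ᵁ U.1) ∧
    ∀ p : PrimeSpectrum Γ(Y, U.1), Module.rankAtStalk Γ(X, f ⁻¹ᵁ U.1) p = d

/-- Two closed immersions `i₁ : Z₁ ⟶ W` and `i₂ : Z₂ ⟶ W` define the same closed subscheme
of `W` if there is an isomorphism `Z₁ ≅ Z₂` commuting with the immersions. -/
def IsSameClosedSubscheme {W Z₁ Z₂ : AlgebraicGeometry.Scheme}
    (i₁ : Z₁ ⟶ W) (i₂ : Z₂ ⟶ W) : Prop :=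
  ∃ e : Z₁ ≅ Z₂, e.hom ≫ i₂ = i₁


/-- The data of a scheme `R` over `S` representing the Weil restriction of `f : X' ⟶ S'`
along `g : S' ⟶ S`: bijections `Hom_S(T, R) ≃ Hom_{S'}(S' ×_S T, X')`, natural in the
`S`-scheme `T`. -/
structure WeilRestrictionRep {S' S X' : AlgebraicGeometry.Scheme}
    (g : S' ⟶ S) (f : X' ⟶ S') where
  R : AlgebraicGeometry.Scheme
  str : R ⟶ S
  equiv : ∀ (T : AlgebraicGeometry.Scheme) (t : T ⟶ S),
    {h : T ⟶ R // h ≫ str = t} ≃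
      {h : pullback g t ⟶ X' // h ≫ f = pullback.fst g t}
  naturality : ∀ (T₁ T₂ : AlgebraicGeometry.Scheme) (t₁ : T₁ ⟶ S) (t₂ : T₂ ⟶ S)
    (α : T₁ ⟶ T₂) (hα : α ≫ t₂ = t₁) (h : T₂ ⟶ R) (hh : h ≫ str = t₂),
    (equiv T₁ t₁ ⟨α ≫ h, by rw [Category.assoc, hh, hα]⟩).1 =
      pullback.map g t₁ g t₂ (𝟙 S') α (𝟙 S) (by simp)
        (by rw [Category.comp_id, hα]) ≫ (equiv T₂ t₂ ⟨h, hh⟩).1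

open MorphismProperty in
lemma IsIntegralHom.isClosedMap_base' {X Y : AlgebraicGeometry.Scheme} (h : X ⟶ Y)
    [AlgebraicGeometry.IsIntegralHom h] : IsClosedMap h.base := by
  show topologically @IsClosedMap h
  exact h.isClosedMap


namespace WeilRestrictionRep

variable {S' S X' : AlgebraicGeometry.Scheme} {g : S' ⟶ S} {f : X' ⟶ S'}
  (r : WeilRestrictionRep g f)

/-- The universal element. -/
noncomputable def univ : pullback g r.str ⟶ X' :=
  (r.equiv r.R r.str ⟨𝟙 r.R, Category.id_comp _⟩).1

lemma univ_comp : r.univ ≫ f = pullback.fst g r.str :=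
  (r.equiv r.R r.str ⟨𝟙 r.R, Category.id_comp _⟩).2

lemma val_eq {T : AlgebraicGeometry.Scheme} (t : T ⟶ S) (τ : T ⟶ r.R)
    (hτ : τ ≫ r.str = t) :
    (r.equiv T t ⟨τ, hτ⟩).1 = pullback.map g t g r.str (𝟙 S') τ (𝟙 S) (by simp)
      (by rw [Category.comp_id, hτ]) ≫ r.univ := by
  subst hτ
  have h2 : (⟨τ, rfl⟩ : {h : T ⟶ r.R // h ≫ r.str = τ ≫ r.str}) =
      ⟨τ ≫ 𝟙 r.R, by rw [Category.assoc, Category.id_comp]⟩ :=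
    Subtype.ext (Category.comp_id τ).symm
  exact (congrArg (fun z : {h : T ⟶ r.R // h ≫ r.str = τ ≫ r.str} =>
      (r.equiv T (τ ≫ r.str) z).1) h2).trans
    (r.naturality T r.R (τ ≫ r.str) r.str τ rfl (𝟙 r.R) (Category.id_comp _))

lemma hom_ext {T : AlgebraicGeometry.Scheme} {t : T ⟶ S} (a b : T ⟶ r.R)
    (ha : a ≫ r.str = t) (hb : b ≫ r.str = t)
    (h : (r.equiv T t ⟨a, ha⟩).1 = (r.equiv T t ⟨b, hb⟩).1) : a = b :=
  congrArg Subtype.val ((r.equiv T t).injective (Subtype.ext h))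

end WeilRestrictionRep

theorem weilRestriction_openImmersion_aux {S' S X' U' : AlgebraicGeometry.Scheme}
    (g : S' ⟶ S) (hg : AlgebraicGeometry.IsFinite g) (f : X' ⟶ S')
    (ι : U' ⟶ X') [AlgebraicGeometry.IsOpenImmersion ι]
    (r : WeilRestrictionRep g f) (rU : WeilRestrictionRep g (ι ≫ f))
    (ρ : rU.R ⟶ r.R) (hρ : ρ ≫ r.str = rU.str)
    (hcomp : ∀ (T : AlgebraicGeometry.Scheme) (t : T ⟶ S) (h : T ⟶ rU.R)
      (hh : h ≫ rU.str = t),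
      (r.equiv T t ⟨h ≫ ρ, by rw [Category.assoc, hρ, hh]⟩).1 =
        (rU.equiv T t ⟨h, hh⟩).1 ≫ ι) :
    AlgebraicGeometry.IsOpenImmersion ρ := by
  classical
  -- universal elements
  set u : pullback g r.str ⟶ X' := r.univ with hu_def
  set uU : pullback g rU.str ⟶ U' := rU.univ with huU_def
  -- the comparison: (Pmap ρ) ≫ u = uU ≫ ι
  have star : pullback.map g rU.str g r.str (𝟙 S') ρ (𝟙 S) (by simp)
      (by rw [Category.comp_id, hρ]) ≫ u = uU ≫ ι := by
    have h1 := hcomp rU.R rU.str (𝟙 rU.R) (Category.id_comp _)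
    have h2 : (⟨𝟙 rU.R ≫ ρ, by rw [Category.assoc, hρ, Category.id_comp]⟩ :
        {h : rU.R ⟶ r.R // h ≫ r.str = rU.str}) = ⟨ρ, hρ⟩ :=
      Subtype.ext (Category.id_comp ρ)
    exact (r.val_eq rU.str ρ hρ).symm.trans
      ((congrArg (fun z : {h : rU.R ⟶ r.R // h ≫ r.str = rU.str} =>
        (r.equiv rU.R rU.str z).1) h2.symm).trans h1)
  -- the closed set and the open V
  haveI : AlgebraicGeometry.IsFinite (pullback.snd g r.str) :=
    by haveI := hg; infer_instance
  have hclosedmap : IsClosedMap (pullback.snd g r.str).base :=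
    IsIntegralHom.isClosedMap_base' _
  have hZc : IsClosed (u.base ⁻¹' (Set.range ι.base)ᶜ) :=
    (ι.isOpenEmbedding.isOpen_range.isClosed_compl).preimage u.continuous
  set Z := u.base ⁻¹' (Set.range ι.base)ᶜ with hZ_def
  set V : r.R.Opens := ⟨((pullback.snd g r.str).base '' Z)ᶜ,
    (hclosedmap Z hZc).isOpen_compl⟩ with hV_def
  -- the map on the pullback over V lands in U'
  have hrangeU : Set.range (pullback.map g (V.ι ≫ r.str) g r.str (𝟙 S') V.ι (𝟙 S)
      (by simp) (by rw [Category.comp_id])≫ u).base ⊆ Set.range ι.base := by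
    rintro _ ⟨q, rfl⟩
    rw [AlgebraicGeometry.Scheme.Hom.comp_apply]
    set p := (pullback.map g (V.ι ≫ r.str) g r.str (𝟙 S') V.ι (𝟙 S)
      (by simp) (by rw [Category.comp_id])).base q with hp_def
    have hsnd : (pullback.snd g r.str).base p =
        V.ι.base ((pullback.snd g (V.ι ≫ r.str)).base q) := by
      rw [hp_def, ← AlgebraicGeometry.Scheme.Hom.comp_apply]
      have : pullback.map g (V.ι ≫ r.str) g r.str (𝟙 S') V.ι (𝟙 S)
          (by simp) (by rw [Category.comp_id]) ≫ pullback.snd g r.str =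
          pullback.snd g (V.ι ≫ r.str) ≫ V.ι := by simp [pullback.lift_snd]
      rw [this, AlgebraicGeometry.Scheme.Hom.comp_apply]
    by_contra hmem
    have hpZ : p ∈ Z := hmem
    have : (pullback.snd g r.str).base p ∈ (pullback.snd g r.str).base '' Z :=
      ⟨p, hpZ, rfl⟩
    have hV : (pullback.snd g r.str).base p ∈ (V : Set r.R) := by
      rw [hsnd]
      have := AlgebraicGeometry.Scheme.Opens.range_ι (X := r.R) (U := V)
      rw [← this]
      exact ⟨_, rfl⟩
    exact hV this
  -- ρ lands in V
  have hrange_ρ : Set.range ρ.base ⊆ Set.range V.ι.base := by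
    rw [AlgebraicGeometry.Scheme.Opens.range_ι]
    rintro _ ⟨y, rfl⟩
    show ρ.base y ∈ ((pullback.snd g r.str).base '' Z)ᶜ
    rintro ⟨p, hpZ, hp⟩
    -- left square of the pasted pullback
    have hbig : IsPullback (pullback.map g rU.str g r.str (𝟙 S') ρ (𝟙 S) (by simp)
        (by rw [Category.comp_id, hρ]) ≫ pullback.fst g r.str)
        (pullback.snd g rU.str) g (ρ ≫ r.str) := by
      have h1 : pullback.map g rU.str g r.str (𝟙 S') ρ (𝟙 S) (by simp)
          (by rw [Category.comp_id, hρ]) ≫ pullback.fst g r.str =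
          pullback.fst g rU.str := by simp [pullback.lift_fst]
      rw [h1, hρ]
      exact IsPullback.of_hasPullback g rU.str
    have hpb : IsPullback (pullback.map g rU.str g r.str (𝟙 S') ρ (𝟙 S) (by simp)
        (by rw [Category.comp_id, hρ])) (pullback.snd g rU.str)
        (pullback.snd g r.str) ρ :=
      IsPullback.of_right hbig (by simp [pullback.lift_snd]) (IsPullback.of_hasPullback g r.str)
    obtain ⟨z, hz1, hz2⟩ :=
      AlgebraicGeometry.Scheme.Pullback.exists_preimage_pullback
        (f := pullback.snd g r.str) (g := ρ) p y hp
    have hinvm : hpb.isoPullback.inv ≫ pullback.map g rU.str g r.str (𝟙 S') ρ (𝟙 S)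
        (by simp) (by rw [Category.comp_id, hρ]) =
        pullback.fst (pullback.snd g r.str) ρ := by
      rw [Iso.inv_comp_eq]
      exact hpb.isoPullback_hom_fst.symm
    have hmq : (pullback.map g rU.str g r.str (𝟙 S') ρ (𝟙 S) (by simp)
        (by rw [Category.comp_id, hρ])).base (hpb.isoPullback.inv.base z) = p := by
      rw [← AlgebraicGeometry.Scheme.Hom.comp_apply, hinvm]
      exact hz1
    have : u.base p ∈ Set.range ι.base := by
      rw [← hmq, ← AlgebraicGeometry.Scheme.Hom.comp_apply, star,
        AlgebraicGeometry.Scheme.Hom.comp_apply]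
      exact ⟨_, rfl⟩
    exact hpZ this
  -- the morphism a : V ⟶ rU.R
  have hUf : IsOpenImmersion.lift ι (pullback.map g (V.ι ≫ r.str) g r.str (𝟙 S') V.ι (𝟙 S)
        (by simp) (by rw [Category.comp_id]) ≫ u) hrangeU ≫ (ι ≫ f) =
      pullback.fst g (V.ι ≫ r.str) := by
    rw [← Category.assoc, IsOpenImmersion.lift_fac, Category.assoc, r.univ_comp]
    simp [pullback.lift_fst]
  set a : (V : AlgebraicGeometry.Scheme) ⟶ rU.R :=
    ((rU.equiv V (V.ι ≫ r.str)).symm ⟨_, hUf⟩).1 with ha_def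
  have ha : a ≫ rU.str = V.ι ≫ r.str := ((rU.equiv V (V.ι ≫ r.str)).symm ⟨_, hUf⟩).2
  have e_a : (rU.equiv V (V.ι ≫ r.str) ⟨a, ha⟩).1 =
      IsOpenImmersion.lift ι (pullback.map g (V.ι ≫ r.str) g r.str (𝟙 S') V.ι (𝟙 S)
        (by simp) (by rw [Category.comp_id]) ≫ u) hrangeU :=
    congrArg Subtype.val ((rU.equiv V (V.ι ≫ r.str)).apply_symm_apply ⟨_, hUf⟩)
  -- a ≫ ρ = V.ι
  have haρ : a ≫ ρ = V.ι := by
    apply r.hom_ext (t := V.ι ≫ r.str) (a ≫ ρ) V.ι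
      (by rw [Category.assoc, hρ, ha]) rfl
    refine (hcomp V (V.ι ≫ r.str) a ha).trans ?_ |>.trans (r.val_eq (V.ι ≫ r.str) V.ι rfl).symm
    rw [e_a, IsOpenImmersion.lift_fac]
  -- the lift ρ' : rU.R ⟶ V
  set ρ' : rU.R ⟶ (V : AlgebraicGeometry.Scheme) :=
    IsOpenImmersion.lift V.ι ρ hrange_ρ with hρ'_def
  have hρ'fac : ρ' ≫ V.ι = ρ := IsOpenImmersion.lift_fac _ _ _
  have hρ'str : ρ' ≫ (V.ι ≫ r.str) = rU.str := by
    rw [← Category.assoc, hρ'fac, hρ]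
  -- ρ' ≫ a = 𝟙
  have hl : ρ' ≫ a = 𝟙 rU.R := by
    apply rU.hom_ext (t := rU.str) (ρ' ≫ a) (𝟙 rU.R)
      (by rw [Category.assoc, ha, hρ'str]) (Category.id_comp _)
    have nat2 := rU.naturality rU.R V rU.str (V.ι ≫ r.str) ρ' hρ'str a ha
    refine nat2.trans ?_
    rw [e_a]
    -- now show: map ρ' ≫ lift = uU, by cancel_mono ι
    rw [← cancel_mono ι]
    rw [Category.assoc, IsOpenImmersion.lift_fac, ← Category.assoc]
    have hmapcomp : pullback.map g rU.str g (V.ι ≫ r.str) (𝟙 S') ρ' (𝟙 S) (by simp)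
          (by rw [Category.comp_id, hρ'str]) ≫
        pullback.map g (V.ι ≫ r.str) g r.str (𝟙 S') V.ι (𝟙 S) (by simp)
          (by rw [Category.comp_id]) =
        pullback.map g rU.str g r.str (𝟙 S') ρ (𝟙 S) (by simp)
          (by rw [Category.comp_id, hρ]) := by
      apply pullback.hom_ext <;> simp [hρ'fac, pullback.lift_fst, pullback.lift_snd, pullback.lift_fst_assoc, pullback.lift_snd_assoc]
    rw [hmapcomp]
    exact star
  have hr : a ≫ ρ' = 𝟙 (V : AlgebraicGeometry.Scheme) := by
    rw [← cancel_mono V.ι, Category.assoc, hρ'fac, haρ, Category.id_comp]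
  haveI : IsIso ρ' := ⟨a, hl, hr⟩
  rw [← hρ'fac]
  infer_instance


/-- **Weil restriction of an open immersion is an open immersion.**  Let `g : S' ⟶ S` be
finite flat of rank `d`, `f : X' ⟶ S'` a morphism, and `ι : U' ⟶ X'` an open immersion
(i.e. `U'` an open subscheme of `X'`).  If `R` represents the Weil restriction of `X'`
and `R_U` that of `U'` along `g`, then the morphism `R_U ⟶ R` corresponding, under the
representing bijections, to composition with `ι`, is an open immersion. -/
theorem weilRestriction_openImmersion {S' S X' U' : AlgebraicGeometry.Scheme} (d : ℕ)
    (g : S' ⟶ S) (hg : FiniteFlatOfRank d g) (f : X' ⟶ S')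
    (ι : U' ⟶ X') [AlgebraicGeometry.IsOpenImmersion ι]
    (r : WeilRestrictionRep g f) (rU : WeilRestrictionRep g (ι ≫ f))
    (ρ : rU.R ⟶ r.R) (hρ : ρ ≫ r.str = rU.str)
    (hcomp : ∀ (T : AlgebraicGeometry.Scheme) (t : T ⟶ S) (h : T ⟶ rU.R)
      (hh : h ≫ rU.str = t),
      (r.equiv T t ⟨h ≫ ρ, by rw [Category.assoc, hρ, hh]⟩).1 =
        (rU.equiv T t ⟨h, hh⟩).1 ≫ ι) :
    AlgebraicGeometry.IsOpenImmersion ρ :=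
  weilRestriction_openImmersion_aux g hg.1 f ι r rU ρ hρ hcomp
end
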